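/- Let n be an even positive integer divisible by 3 with n ≥ 12, and let P = n/2 - 2. Then the number of ordered pairs (x, y) of odd integers with x, y ≥ 3, x + y = n, and 3 ∣ x or 3 ∣ y equals (P + 2)/3. -/

import Mathlib

/-!
Since `3 ∣ n`, an odd summand `x` of `n = x + y` is divisible by 3 iff `y` is, and an odd
multiple of 3 is `≡ 3 [MOD 6]`. So the pairs counted are `(6k + 3, n - 6k - 3)` for `k < n / 6`,
and `n / 6 = (P + 2) / 3`.
-/

def goldbachPairs (n : ℕ) : Finset (ℕ × ℕ) :=
  (Finset.range n ×ˢ Finset.range n).filter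
    fun z => Odd z.1 ∧ Odd z.2 ∧ 3 ≤ z.1 ∧ 3 ≤ z.2 ∧ z.1 + z.2 = n

open Finset

lemma filter_three_dvd_goldbachPairs_eq {n : ℕ} (h6 : 6 ∣ n) :
    (goldbachPairs n).filter (fun z => 3 ∣ z.1 ∨ 3 ∣ z.2) =
      (range (n / 6)).image fun k => (6 * k + 3, n - (6 * k + 3)) := by
  ext ⟨x, y⟩
  simp only [goldbachPairs, mem_filter, mem_product, mem_range, mem_image, Prod.mk.injEq,
    Nat.odd_iff]
  constructor
  · rintro ⟨⟨-, hx, hy, hx3, hy3, hsum⟩, hdvd⟩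
    have h3x : 3 ∣ x := hdvd.elim id fun h3y => by omega
    exact ⟨x / 6, by omega, by omega, by omega⟩
  · rintro ⟨k, hk, rfl, rfl⟩
    omega

lemma card_filter_three_dvd_goldbachPairs {n : ℕ} (h6 : 6 ∣ n) :
    ((goldbachPairs n).filter fun z => 3 ∣ z.1 ∨ 3 ∣ z.2).card = n / 6 := by
  rw [filter_three_dvd_goldbachPairs_eq h6, card_image_of_injective, card_range]
  intro k l hkl
  simp only [Prod.mk.injEq] at hkl
  omega

theorem stmt1_general (n P : ℕ) (hn : Even n) (h3 : 3 ∣ n) (hP : P = n / 2 - 2) :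
    ((goldbachPairs n).filter fun z => 3 ∣ z.1 ∨ 3 ∣ z.2).card = (P + 2) / 3 := by
  have h6 : 6 ∣ n := Nat.Coprime.mul_dvd_of_dvd_of_dvd (by norm_num) hn.two_dvd h3
  rw [card_filter_three_dvd_goldbachPairs h6]
  omega

/-- If `n` is even, divisible by 3, `n ≥ 12`, and `P = n/2 - 2`, then the number of
ordered pairs of odd integers `≥ 3` summing to `n` with `3 ∣ x` or `3 ∣ y` is `(P+2)/3`. -/
theorem stmt1 (n P : ℕ) (hn : Even n) (h3 : 3 ∣ n) (h12 : 12 ≤ n) (hP : P = n / 2 - 2) :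
    ((goldbachPairs n).filter fun z => 3 ∣ z.1 ∨ 3 ∣ z.2).card = (P + 2) / 3 :=
  stmt1_general n P hn h3 hP
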